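/- arXiv:1903.07963 — 3 statements merged into one kernel-verified Lean document; each statement's English description precedes it below -/
import Mathlib

section
/- Let n ≥ 1, let a, b : Fin n → ℝ be sorted age vectors (nonincreasing, nonnegative entries) with a i ≤ b i for every i, and let z ≥ 0. Let a' be the poll update of a with rank 0 and duration z (the maximum-age-first update), and for any rank j : Fin n let b' be the poll update of b with rank j and duration z. Then a' i ≤ b' i for every i : Fin n. -/
/-- The poll update of an ordered age vector `v` with rank `j` and duration `z`:
the sensor with the `(j+1)`-th largest age is polled, its age resets to `z`,
all other ages increase by `z`, and the result is kept in nonincreasing order. -/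
def pollUpdate {n : ℕ} (v : Fin n → ℝ) (j : Fin n) (z : ℝ) : Fin n → ℝ := fun i =>
  if h : (i : ℕ) + 1 < n then
    (if (i : ℕ) < (j : ℕ) then v i + z else v ⟨(i : ℕ) + 1, h⟩ + z)
  else z

/-- Poll case of Lemma 2: the maximum-age-first poll update preserves componentwise
domination of ordered age vectors, for any rank chosen by the other policy. -/
theorem maf_poll_update_dominates
    (n : ℕ) (hn : 1 ≤ n) (a b : Fin n → ℝ)
    (ha_sorted : Antitone a) (hb_sorted : Antitone b)
    (ha_nonneg : ∀ i, 0 ≤ a i) (hb_nonneg : ∀ i, 0 ≤ b i)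
    (hab : ∀ i, a i ≤ b i)
    (z : ℝ) (hz : 0 ≤ z) (j : Fin n) :
    ∀ i : Fin n, pollUpdate a ⟨0, hn⟩ z i ≤ pollUpdate b j z i := by
  intro i
  unfold pollUpdate
  by_cases h : (i : ℕ) + 1 < n
  · simp only [h, dif_pos]
    have h0 : ¬ (i : ℕ) < (0 : ℕ) := Nat.not_lt_zero _
    rw [if_neg h0]
    by_cases hij : (i : ℕ) < (j : ℕ)
    · rw [if_pos hij]
      have : a ⟨(i : ℕ) + 1, h⟩ ≤ a i := ha_sorted (by simp [Fin.le_def])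
      linarith [hab i]
    · rw [if_neg hij]
      linarith [hab ⟨(i : ℕ) + 1, h⟩]
  · simp [h]
end

section
/- Let n ≥ 2, let a₀ : Fin n → ℝ have pairwise distinct, strictly positive entries, and let (z_k)_{k≥1} be strictly positive reals. Define the labelled age evolution of maximum-age-first polling: at step k, let i_k be the unique index maximizing a_{k−1}, and set a_k i_k = z_k and a_k j = a_{k−1} j + z_k for j ≠ i_k (common additive shifts of all entries, modelling intervening sends, may also be interleaved, as they change neither the ordering nor the argmax). Then for every k ≥ 1 the entries of a_k are again pairwise distinct and strictly positive, a_k attains its strict minimum at i_k, and for every k ≥ 0 the polled indices i_{k+1}, i_{k+2}, …, i_{k+n} are pairwise distinct; consequently, between any two consecutive polls of a sensor i, every other sensor is polled exactly once. -/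
/-- Corollary 1: under maximum-age-first polling with pairwise distinct, strictly positive
initial ages and strictly positive transmission times, the labelled age vector keeps
pairwise distinct, strictly positive entries and attains its strict minimum at the sensor
just polled; each window of `n` consecutive polled sensors is pairwise distinct, and hence
between two consecutive polls of a sensor every other sensor is polled exactly once. -/
theorem maf_round_robin
    (n : ℕ) (hn : 2 ≤ n)
    (a : ℕ → Fin n → ℝ) (i : ℕ → Fin n) (z : ℕ → ℝ)
    (ha0_distinct : Function.Injective (a 0)) (ha0_pos : ∀ j, 0 < a 0 j)
    (hz : ∀ k, 1 ≤ k → 0 < z k)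
    -- at step k+1 the sensor `i (k+1)` with maximum age is polled:
    (hmax : ∀ k, ∀ j, a k j ≤ a k (i (k + 1)))
    -- the polled sensor's age resets to the transmission time:
    (hreset : ∀ k, a (k + 1) (i (k + 1)) = z (k + 1))
    -- every other sensor's age increases by the transmission time:
    (hshift : ∀ k, ∀ j, j ≠ i (k + 1) → a (k + 1) j = a k j + z (k + 1)) :
    (∀ k, 1 ≤ k → Function.Injective (a k)) ∧
    (∀ k, 1 ≤ k → ∀ j, 0 < a k j) ∧
    (∀ k, 1 ≤ k → ∀ j, j ≠ i k → a k (i k) < a k j) ∧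
    (∀ k l m : ℕ, k + 1 ≤ l → l ≤ k + n → k + 1 ≤ m → m ≤ k + n → l ≠ m → i l ≠ i m) ∧
    (∀ k m : ℕ, 1 ≤ k → k < m → i m = i k → (∀ l, k < l → l < m → i l ≠ i k) →
      ∀ j : Fin n, j ≠ i k → ∃! l : ℕ, k < l ∧ l < m ∧ i l = j) := by
  classical
  -- basic state invariant
  have state : ∀ k, Function.Injective (a k) ∧ (∀ j, 0 < a k j) ∧
      (1 ≤ k → ∀ j, j ≠ i k → a k (i k) < a k j) := by
    intro k
    induction k with
    | zero => exact ⟨ha0_distinct, ha0_pos, by omega⟩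
    | succ k ih =>
      obtain ⟨hinj, hpos, _⟩ := ih
      have hz' : 0 < z (k + 1) := hz (k + 1) (by omega)
      have hmin : ∀ j, j ≠ i (k + 1) → a (k + 1) (i (k + 1)) < a (k + 1) j := by
        intro j hj
        rw [hreset k, hshift k j hj]
        have := hpos j
        linarith
      refine ⟨?_, ?_, fun _ => hmin⟩
      · intro j1 j2 h
        by_contra hne
        rcases eq_or_ne j1 (i (k + 1)) with rfl | h1
        · exact absurd h (ne_of_lt (hmin j2 (fun hh => hne hh.symm)))
        · rcases eq_or_ne j2 (i (k + 1)) with rfl | h2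
          · exact absurd h.symm (ne_of_lt (hmin j1 h1))
          · rw [hshift k j1 h1, hshift k j2 h2] at h
            exact hne (hinj (by linarith))
      · intro j
        rcases eq_or_ne j (i (k + 1)) with rfl | hj
        · rw [hreset k]; exact hz'
        · rw [hshift k j hj]; have := hpos j; linarith
  -- once polled, a sensor stays strictly below any sensor not polled since
  have above : ∀ l, 1 ≤ l → ∀ d, ∀ j, j ≠ i l →
      (∀ t, l < t → t ≤ l + d → i t ≠ i l) →
      (∀ t, l < t → t ≤ l + d → i t ≠ j) →
      a (l + d) (i l) < a (l + d) j := by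
    intro l hl d
    induction d with
    | zero => intro j hj _ _; exact (state l).2.2 hl j hj
    | succ d ih =>
      intro j hj h1 h2
      have key := ih j hj (fun t ha hb => h1 t ha (by omega))
        (fun t ha hb => h2 t ha (by omega))
      have hil : i l ≠ i (l + d + 1) :=
        fun h => h1 (l + d + 1) (by omega) (by omega) h.symm
      have hjn : j ≠ i (l + d + 1) :=
        fun h => h2 (l + d + 1) (by omega) (by omega) h.symm
      have e1 : a (l + (d + 1)) (i l) = a (l + d) (i l) + z (l + d + 1) :=
        hshift (l + d) (i l) hil
      have e2 : a (l + (d + 1)) j = a (l + d) j + z (l + d + 1) :=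
        hshift (l + d) j hjn
      rw [e1, e2]
      linarith
  -- no repeats within a window of length n
  have window : ∀ b l m : ℕ, b + 1 ≤ l → l < m → m ≤ b + n → i l ≠ i m := by
    intro b l m hbl hlm hmb heq
    set P : ℕ → Prop := fun t => l ≤ t ∧ i t = i m with hP
    have hPl : P l := ⟨le_refl l, heq⟩
    have hlm1 : l ≤ m - 1 := by omega
    set l' := Nat.findGreatest P (m - 1) with hl'def
    have hll' : l ≤ l' := Nat.le_findGreatest hlm1 hPl
    have hl'le : l' ≤ m - 1 := Nat.findGreatest_le (m - 1)
    have hPl' : P l' := by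
      rcases Nat.eq_zero_or_pos l' with h0 | h0
      · have : l = 0 := by omega
        subst this; simpa [h0] using hPl
      · exact Nat.findGreatest_of_ne_zero rfl (by omega)
    have hnomore : ∀ t, l' < t → t ≤ m - 1 → i t ≠ i m := by
      intro t ht1 ht2 hcon
      exact Nat.findGreatest_is_greatest ht1 ht2 ⟨by omega, hcon⟩
    -- find a sensor j ≠ i l' not polled in (l', m-1]
    set s : Finset (Fin n) := insert (i l') ((Finset.Ioc l' (m - 1)).image i) with hs
    have hcard : s.card < n := by
      have h1 : s.card ≤ ((Finset.Ioc l' (m - 1)).image i).card + 1 :=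
        Finset.card_insert_le _ _
      have h2 : ((Finset.Ioc l' (m - 1)).image i).card ≤ (Finset.Ioc l' (m - 1)).card :=
        Finset.card_image_le
      have h3 : (Finset.Ioc l' (m - 1)).card = m - 1 - l' := Nat.card_Ioc l' (m - 1)
      -- l' ≥ l ≥ b+1, m ≤ b+n, so m - 1 - l' ≤ n - 2
      omega
    have : ∃ j : Fin n, j ∉ s := by
      by_contra hc
      push_neg at hc
      have : (Finset.univ : Finset (Fin n)) ⊆ s := fun j _ => hc j
      have := Finset.card_le_card this
      simp [Finset.card_univ] at this
      omega
    obtain ⟨j, hj⟩ := this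
    have hjne : j ≠ i l' := by
      intro h; exact hj (by simp [hs, h])
    have hjnot : ∀ t, l' < t → t ≤ m - 1 → i t ≠ j := by
      intro t ht1 ht2 hcon
      exact hj (by
        simp only [hs, Finset.mem_insert, Finset.mem_image]
        right
        exact ⟨t, Finset.mem_Ioc.2 ⟨ht1, ht2⟩, hcon⟩)
    have hl'1 : 1 ≤ l' := by omega
    have habove := above l' hl'1 (m - 1 - l') j hjne
      (fun t ht1 ht2 => by
        have := hnomore t ht1 (by omega)
        rw [hPl'.2]; exact this)
      (fun t ht1 ht2 => hjnot t ht1 (by omega))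
    have em : l' + (m - 1 - l') = m - 1 := by omega
    rw [em] at habove
    have hmaxj := hmax (m - 1) j
    have em2 : m - 1 + 1 = m := by omega
    rw [em2] at hmaxj
    rw [← hPl'.2] at hmaxj
    linarith
  refine ⟨fun k hk => (state k).1, fun k hk => (state k).2.1,
    fun k hk => (state k).2.2 hk, ?_, ?_⟩
  · -- fourth conjunct
    intro k l m h1 h2 h3 h4 hne
    rcases lt_or_gt_of_ne hne with h | h
    · exact window k l m h1 h h4
    · exact fun hc => window k m l h3 h h2 hc.symm
  · -- fifth conjunct
    intro k m hk hkm him hgap j hj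
    have hwin : ∀ l m' : ℕ, k + 1 ≤ l → l < m' → m' ≤ k + n → i l ≠ i m' := window k
    -- i is injective on (k, k+n], hence surjective onto Fin n
    have hinjOn : Set.InjOn i ↑(Finset.Ioc k (k + n)) := by
      intro x hx y hy hxy
      simp only [Finset.coe_Ioc, Set.mem_Ioc] at hx hy
      by_contra hne
      rcases lt_or_gt_of_ne hne with h | h
      · exact window k x y (by omega) h hy.2 hxy
      · exact window k y x (by omega) h hx.2 hxy.symm
    have himg : (Finset.Ioc k (k + n)).image i = Finset.univ := by
      apply Finset.eq_univ_of_card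
      rw [Finset.card_image_of_injOn hinjOn, Nat.card_Ioc]
      · simp [Finset.card_univ]
    have hsurj : ∀ j' : Fin n, ∃ l, k < l ∧ l ≤ k + n ∧ i l = j' := by
      intro j'
      have : j' ∈ (Finset.Ioc k (k + n)).image i := by rw [himg]; exact Finset.mem_univ _
      obtain ⟨l, hl, hil⟩ := Finset.mem_image.1 this
      exact ⟨l, (Finset.mem_Ioc.1 hl).1, (Finset.mem_Ioc.1 hl).2, hil⟩
    -- m ≤ k + n
    have hmle : m ≤ k + n := by
      by_contra hc
      obtain ⟨l₀, hl₀1, hl₀2, hl₀3⟩ := hsurj (i k)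
      exact hgap l₀ hl₀1 (by omega) hl₀3
    -- m = k + n
    have hmeq : m = k + n := by
      by_contra hc
      exact window (k - 1) k m (by omega) hkm (by omega) him.symm
    -- existence
    obtain ⟨l, hl1, hl2, hl3⟩ := hsurj j
    have hlm : l < m := by
      rcases lt_or_eq_of_le (show l ≤ m by omega) with h | h
      · exact h
      · exfalso; apply hj; rw [← hl3, h, him]
    refine ⟨l, ⟨hl1, hlm, hl3⟩, ?_⟩
    intro l' ⟨h1', h2', h3'⟩
    by_contra hne
    rcases lt_or_gt_of_ne hne with h | h
    · exact window k l' l (by omega) h (by omega) (by rw [h3', hl3])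
    · exact window k l l' hl1 h (by omega) (by rw [hl3, h3'])
end

section
/- Let (Y_k)_{k≥1} be strictly positive reals and (T_k)_{k≥0} nonnegative reals. Let b₀ = 0 and b_k = Y_1 + ⋯ + Y_k, and define Δ : [0,∞) → ℝ by Δ(t) = T_{k−1} + (t − b_{k−1}) for t ∈ [b_{k−1}, b_k). Suppose that (1/k) ∑_{j=1}^{k} Y_j → y as k → ∞ for some y > 0, and that (1/k) ∑_{j=1}^{k} (Y_j T_{j−1} + Y_j²/2) → q as k → ∞ for some q ∈ ℝ. Then (1/t) ∫₀^t Δ(u) du → q/y as t → ∞. -/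
open Filter

set_option maxHeartbeats 1000000 in
/-- Sample-path derivation of the average-age formula (Equation (7)): for the sawtooth
age function `Δ` with reset times `b k = Y 1 + ⋯ + Y k`, reset values `T k`, and unit
growth rate, if the empirical means of `Y` and of the areas `Y T + Y²/2` converge to
`y > 0` and `q`, then the time-average age converges to `q / y`. -/
theorem avg_age_sample_path
    (Y : ℕ → ℝ) (T : ℕ → ℝ)
    (hY : ∀ k, 1 ≤ k → 0 < Y k) (hT : ∀ k, 0 ≤ T k)
    (b : ℕ → ℝ) (hb : ∀ k, b k = ∑ j ∈ Finset.range k, Y (j + 1))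
    (Δ : ℝ → ℝ)
    (hΔ : ∀ k : ℕ, ∀ t : ℝ, b k ≤ t → t < b (k + 1) → Δ t = T k + (t - b k))
    (y q : ℝ) (hy : 0 < y)
    (hYlim : Tendsto (fun k : ℕ => (k : ℝ)⁻¹ * ∑ j ∈ Finset.range k, Y (j + 1))
      atTop (nhds y))
    (hQlim : Tendsto
      (fun k : ℕ => (k : ℝ)⁻¹ * ∑ j ∈ Finset.range k, (Y (j + 1) * T j + (Y (j + 1)) ^ 2 / 2))
      atTop (nhds q)) :
    Tendsto (fun t : ℝ => t⁻¹ * ∫ u in (0:ℝ)..t, Δ u) atTop (nhds (q / y)) := by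
  classical
  have hb0 : b 0 = 0 := by simp [hb]
  have hbsucc : ∀ k, b (k + 1) = b k + Y (k + 1) := by
    intro k; simp [hb, Finset.sum_range_succ]
  have hbmono : StrictMono b := strictMono_nat_of_lt_succ (fun k => by
    rw [hbsucc]; linarith [hY (k + 1) (by omega)])
  have hbpos : ∀ k, 1 ≤ k → 0 < b k := by
    intro k hk
    have := hbmono (show 0 < k by omega)
    rwa [hb0] at this
  have hbnonneg : ∀ k, 0 ≤ b k := by
    intro k
    rcases Nat.eq_zero_or_pos k with h | h
    · simp [h, hb0]
    · exact (hbpos k h).le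
  -- the mean of b tends to y
  have hbk : Tendsto (fun k : ℕ => (k : ℝ)⁻¹ * b k) atTop (nhds y) := by
    have : (fun k : ℕ => (k : ℝ)⁻¹ * b k)
        = fun k : ℕ => (k : ℝ)⁻¹ * ∑ j ∈ Finset.range k, Y (j + 1) := by
      funext k; rw [hb]
    rw [this]; exact hYlim
  -- b tends to infinity
  have hbtop : Tendsto b atTop atTop := by
    have h1 : Tendsto (fun k : ℕ => (k : ℝ) * ((k : ℝ)⁻¹ * b k)) atTop atTop :=
      Tendsto.atTop_mul_pos hy tendsto_natCast_atTop_atTop hbk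
    refine h1.congr' ?_
    filter_upwards [eventually_ge_atTop 1] with k hk
    have hk0 : (k : ℝ) ≠ 0 := Nat.cast_ne_zero.mpr (by omega)
    field_simp
  -- area sums
  set A : ℕ → ℝ := fun k => ∑ j ∈ Finset.range k, (Y (j + 1) * T j + (Y (j + 1)) ^ 2 / 2)
    with hA
  have hAnonneg : ∀ k, 0 ≤ A k := by
    intro k
    apply Finset.sum_nonneg
    intro j _
    have hYj := hY (j + 1) (by omega)
    have := hT j
    positivity
  have hAsucc : ∀ k, A (k + 1) = A k + (Y (k + 1) * T k + (Y (k + 1)) ^ 2 / 2) := by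
    intro k; simp [hA, Finset.sum_range_succ]
  have hAlim : Tendsto (fun k : ℕ => (k : ℝ)⁻¹ * A k) atTop (nhds q) := hQlim
  -- integral of the linear piece
  have hint : ∀ (k : ℕ) (c : ℝ),
      ∫ u in (b k)..c, (T k + (u - b k)) = T k * (c - b k) + (c - b k) ^ 2 / 2 := by
    intro k c
    have hderiv : ∀ u ∈ Set.uIcc (b k) c,
        HasDerivAt (fun u => T k * (u - b k) + (u - b k) ^ 2 / 2) (T k + (u - b k)) u := by
      intro u _
      have h1 : HasDerivAt (fun u : ℝ => u - b k) 1 u := (hasDerivAt_id u).sub_const _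
      have h2 := (h1.pow 2).div_const 2
      have h3 := (h1.const_mul (T k)).add h2
      exact h3.congr_deriv (by norm_num)
    have hcont : IntervalIntegrable (fun u => T k + (u - b k)) MeasureTheory.volume (b k) c :=
      (by continuity : Continuous fun u : ℝ => T k + (u - b k)).intervalIntegrable _ _
    rw [intervalIntegral.integral_eq_sub_of_hasDerivAt hderiv hcont]
    ring
  -- Δ agrees a.e. with the linear piece on each interval
  have haeIoc : ∀ k, ∀ᵐ x ∂(MeasureTheory.volume : MeasureTheory.Measure ℝ),
      x ∈ Set.uIoc (b k) (b (k + 1)) → Δ x = T k + (x - b k) := by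
    intro k
    rw [MeasureTheory.ae_iff]
    refine MeasureTheory.measure_mono_null ?_ (MeasureTheory.measure_singleton (b (k + 1)))
    intro x hx
    simp only [Set.mem_setOf_eq, Classical.not_imp] at hx
    rcases hx with ⟨hmem, hne⟩
    rw [Set.uIoc_of_le (hbmono (Nat.lt_succ_self k)).le] at hmem
    by_contra hxe
    exact hne (hΔ k x hmem.1.le (lt_of_le_of_ne hmem.2 (by simpa using hxe)))
  have hII : ∀ k, IntervalIntegrable Δ MeasureTheory.volume (b k) (b (k + 1)) := by
    intro k
    have hg : IntervalIntegrable (fun u => T k + (u - b k)) MeasureTheory.volume (b k) (b (k + 1)) :=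
      (by continuity : Continuous fun u : ℝ => T k + (u - b k)).intervalIntegrable _ _
    rw [intervalIntegrable_iff] at hg ⊢
    have h : ∀ᵐ x ∂(MeasureTheory.volume.restrict (Set.uIoc (b k) (b (k + 1)))),
        Δ x = T k + (x - b k) :=
      (MeasureTheory.ae_restrict_iff' measurableSet_uIoc).mpr (haeIoc k)
    exact hg.congr_fun_ae (h.mono fun x hx => hx.symm)
  -- key: integral up to b k equals A k
  have hkey : ∀ k, IntervalIntegrable Δ MeasureTheory.volume 0 (b k) ∧
      (∫ u in (0:ℝ)..(b k), Δ u) = A k := by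
    intro k
    induction k with
    | zero =>
      rw [hb0]
      exact ⟨IntervalIntegrable.refl, by simp [hA]⟩
    | succ k ih =>
      refine ⟨ih.1.trans (hII k), ?_⟩
      rw [← intervalIntegral.integral_add_adjacent_intervals ih.1 (hII k), ih.2,
        intervalIntegral.integral_congr_ae (haeIoc k), hint k (b (k + 1)), hAsucc, hbsucc]
      ring
  -- the integral for t in [b k, b (k+1))
  have hInt_t : ∀ (k : ℕ) (t : ℝ), b k ≤ t → t < b (k + 1) →
      (∫ u in (0:ℝ)..t, Δ u) = A k + (T k * (t - b k) + (t - b k) ^ 2 / 2) := by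
    intro k t h1 h2
    have hsub : Set.uIcc (b k) t ⊆ Set.uIcc (b k) (b (k + 1)) := by
      rw [Set.uIcc_of_le h1, Set.uIcc_of_le (hbmono (Nat.lt_succ_self k)).le]
      exact Set.Icc_subset_Icc le_rfl h2.le
    have hI2 : IntervalIntegrable Δ MeasureTheory.volume (b k) t := (hII k).mono_set hsub
    rw [← intervalIntegral.integral_add_adjacent_intervals (hkey k).1 hI2, (hkey k).2]
    congr 1
    rw [intervalIntegral.integral_congr (g := fun u => T k + (u - b k)) ?_, hint k t]
    intro u hu
    rw [Set.uIcc_of_le h1] at hu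
    exact hΔ k u hu.1 (lt_of_le_of_lt hu.2 h2)
  -- the index function
  have hex : ∀ t : ℝ, ∃ n, t < b n := fun t => (hbtop.eventually_gt_atTop t).exists
  set N : ℝ → ℕ := fun t => Nat.find (hex t) - 1 with hNdef
  have hfind1 : ∀ t : ℝ, 0 ≤ t → 1 ≤ Nat.find (hex t) := by
    intro t ht
    by_contra h
    have h0 : Nat.find (hex t) = 0 := by omega
    have := Nat.find_spec (hex t)
    rw [h0, hb0] at this
    linarith
  have hNlt : ∀ t : ℝ, 0 ≤ t → t < b (N t + 1) := by
    intro t ht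
    have : N t + 1 = Nat.find (hex t) := by
      have := hfind1 t ht; simp only [hNdef]; omega
    rw [this]
    exact Nat.find_spec (hex t)
  have hNle : ∀ t : ℝ, 0 ≤ t → b (N t) ≤ t := by
    intro t ht
    have hlt : N t < Nat.find (hex t) := by
      have := hfind1 t ht; simp only [hNdef]; omega
    have := Nat.find_min (hex t) hlt
    linarith [not_lt.mp this]
  have hNtop : Tendsto N atTop atTop := by
    rw [tendsto_atTop]
    intro m
    filter_upwards [eventually_ge_atTop (b m), eventually_ge_atTop (0 : ℝ)] with t h1 h2
    have hlt : b m < b (N t + 1) := lt_of_le_of_lt h1 (hNlt t h2)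
    have := hbmono.lt_iff_lt.mp hlt
    omega
  -- limits of the bounding sequences
  have hratio : Tendsto (fun k : ℕ => ((k : ℝ) + 1) / (k : ℝ)) atTop (nhds 1) := by
    have h1 : Tendsto (fun k : ℕ => 1 + (k : ℝ)⁻¹) atTop (nhds (1 + 0)) :=
      tendsto_const_nhds.add tendsto_inv_atTop_nhds_zero_nat
    rw [add_zero] at h1
    refine h1.congr' ?_
    filter_upwards [eventually_ge_atTop 1] with k hk
    have hk0 : (k : ℝ) ≠ 0 := Nat.cast_ne_zero.mpr (by omega)
    field_simp
  have hbk1 : Tendsto (fun k : ℕ => (k : ℝ)⁻¹ * b (k + 1)) atTop (nhds y) := by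
    have hcomp : Tendsto (fun k : ℕ => ((k + 1 : ℕ) : ℝ)⁻¹ * b (k + 1)) atTop (nhds y) :=
      hbk.comp (tendsto_add_atTop_nat 1)
    have h1 : Tendsto (fun k : ℕ => (((k : ℝ) + 1) / (k : ℝ)) * (((k + 1 : ℕ) : ℝ)⁻¹ * b (k + 1)))
        atTop (nhds (1 * y)) := hratio.mul hcomp
    rw [one_mul] at h1
    refine h1.congr' ?_
    filter_upwards [eventually_ge_atTop 1] with k hk
    have hk0 : (k : ℝ) ≠ 0 := Nat.cast_ne_zero.mpr (by omega)
    have hk1 : ((k : ℝ) + 1) ≠ 0 := by positivity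
    push_cast
    field_simp
  have hA1 : Tendsto (fun k : ℕ => (k : ℝ)⁻¹ * A (k + 1)) atTop (nhds q) := by
    have hcomp : Tendsto (fun k : ℕ => ((k + 1 : ℕ) : ℝ)⁻¹ * A (k + 1)) atTop (nhds q) :=
      hAlim.comp (tendsto_add_atTop_nat 1)
    have h1 : Tendsto (fun k : ℕ => (((k : ℝ) + 1) / (k : ℝ)) * (((k + 1 : ℕ) : ℝ)⁻¹ * A (k + 1)))
        atTop (nhds (1 * q)) := hratio.mul hcomp
    rw [one_mul] at h1
    refine h1.congr' ?_
    filter_upwards [eventually_ge_atTop 1] with k hk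
    have hk0 : (k : ℝ) ≠ 0 := Nat.cast_ne_zero.mpr (by omega)
    have hk1 : ((k : ℝ) + 1) ≠ 0 := by positivity
    push_cast
    field_simp
  have hL : Tendsto (fun k : ℕ => (b (k + 1))⁻¹ * A k) atTop (nhds (q / y)) := by
    have h1 : Tendsto (fun k : ℕ => ((k : ℝ)⁻¹ * b (k + 1))⁻¹ * ((k : ℝ)⁻¹ * A k))
        atTop (nhds (y⁻¹ * q)) := (hbk1.inv₀ hy.ne').mul hAlim
    have h2 : y⁻¹ * q = q / y := by rw [inv_mul_eq_div]
    rw [← h2]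
    refine h1.congr' ?_
    filter_upwards [eventually_ge_atTop 1] with k hk
    have hk0 : (k : ℝ) ≠ 0 := Nat.cast_ne_zero.mpr (by omega)
    have hbp : (b (k + 1)) ≠ 0 := (hbpos (k + 1) (by omega)).ne'
    field_simp
  have hU : Tendsto (fun k : ℕ => (b k)⁻¹ * A (k + 1)) atTop (nhds (q / y)) := by
    have h1 : Tendsto (fun k : ℕ => ((k : ℝ)⁻¹ * b k)⁻¹ * ((k : ℝ)⁻¹ * A (k + 1)))
        atTop (nhds (y⁻¹ * q)) := (hbk.inv₀ hy.ne').mul hA1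
    have h2 : y⁻¹ * q = q / y := by rw [inv_mul_eq_div]
    rw [← h2]
    refine h1.congr' ?_
    filter_upwards [eventually_ge_atTop 1] with k hk
    have hk0 : (k : ℝ) ≠ 0 := Nat.cast_ne_zero.mpr (by omega)
    have hbp : (b k) ≠ 0 := (hbpos k hk).ne'
    field_simp
  -- squeeze
  refine tendsto_of_tendsto_of_tendsto_of_le_of_le' (hL.comp hNtop) (hU.comp hNtop) ?_ ?_
  · filter_upwards [eventually_ge_atTop (b 1), eventually_gt_atTop (0 : ℝ)] with t hbt ht
    have htn : 0 ≤ t := ht.le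
    have h1 := hNle t htn
    have h2 := hNlt t htn
    have hIt := hInt_t (N t) t h1 h2
    have hTnn := hT (N t)
    have hAnn := hAnonneg (N t)
    have hIlow : A (N t) ≤ ∫ u in (0:ℝ)..t, Δ u := by
      rw [hIt]; nlinarith [sq_nonneg (t - b (N t))]
    have hbN1 : 0 < b (N t + 1) := hbpos _ (by omega)
    have hinv : (b (N t + 1))⁻¹ ≤ t⁻¹ := by
      apply inv_anti₀ ht h2.le
    calc (b (N t + 1))⁻¹ * A (N t) ≤ t⁻¹ * A (N t) :=
          mul_le_mul_of_nonneg_right hinv hAnn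
      _ ≤ t⁻¹ * ∫ u in (0:ℝ)..t, Δ u :=
          mul_le_mul_of_nonneg_left hIlow (inv_nonneg.mpr htn)
  · filter_upwards [eventually_ge_atTop (b 1), eventually_gt_atTop (0 : ℝ)] with t hbt ht
    have htn : 0 ≤ t := ht.le
    have h1 := hNle t htn
    have h2 := hNlt t htn
    have hN1 : 1 ≤ N t := by
      have hlt : b 1 < b (N t + 1) := lt_of_le_of_lt hbt h2
      have := hbmono.lt_iff_lt.mp hlt
      omega
    have hbN : 0 < b (N t) := hbpos _ hN1
    have hIt := hInt_t (N t) t h1 h2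
    have hTnn := hT (N t)
    have hIup : (∫ u in (0:ℝ)..t, Δ u) ≤ A (N t + 1) := by
      rw [hIt, hAsucc]
      have hd1 : 0 ≤ t - b (N t) := by linarith
      have hd2 : t - b (N t) ≤ Y (N t + 1) := by
        have := hbsucc (N t); linarith
      nlinarith
    have hIlow : 0 ≤ ∫ u in (0:ℝ)..t, Δ u := by
      rw [hIt]
      have hAnn := hAnonneg (N t)
      nlinarith [sq_nonneg (t - b (N t))]
    have hinv : t⁻¹ ≤ (b (N t))⁻¹ := inv_anti₀ hbN h1
    calc t⁻¹ * ∫ u in (0:ℝ)..t, Δ u ≤ t⁻¹ * A (N t + 1) :=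
          mul_le_mul_of_nonneg_left hIup (inv_nonneg.mpr htn)
      _ ≤ (b (N t))⁻¹ * A (N t + 1) :=
          mul_le_mul_of_nonneg_right hinv (hAnonneg _)
end
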